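/- arXiv:2105.05485 — 2 statements merged into one kernel-verified Lean document; each statement's English description precedes it below -/
import Mathlib

section
/- In the gamma-approximated detection model (Φ a random subset of {1,…,N} with P[Φ = S] = P_S = ∏_{k∈S} p_k ∏_{k∉S}(1−p_k); Z_S ~ Gamma(v_S, ω_S) for S ≠ ∅, Z_∅ = 0; Φ independent of (Z_S); P_j > 0, σ_w² > 0), let additionally H ~ Exp(1) be independent of Φ and (Z_S), and let P_t > 0, d_{tw} > 0, α > 0. Define ρ_1(x) = P_t d_{tw}^{−α} x + σ_w² and, for μ > σ_w², ρ_2 = (μ − σ_w²) d_{tw}^{α} / P_t. Then the average detection error probability ξ̄(μ) = P[P_j Z_Φ + σ_w² > μ] + E_H[ P[ρ_1(H) + P_j Z_Φ < μ | H] ] satisfies, for every μ > σ_w²: ξ̄(μ) = Σ_{∅≠S} P_S ( Γ(v_S, (μ−σ_w²)/(ω_S P_j))/Γ(v_S) − ∫_0^{ρ_2} e^{−x} Γ(v_S, (μ−ρ_1(x))/(ω_S P_j))/Γ(v_S) dx ) + 1 − e^{−ρ_2}. (Paper's Theorem 2, Eq. (22).) -/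
open MeasureTheory ProbabilityTheory Finset

/-- Discrete σ-algebra on finite sets, so that a random subset is a random variable. -/
instance (priority := low) {α : Type*} : MeasurableSpace (Finset α) := ⊤

/-- Upper incomplete gamma function `Γ(a, x) = ∫_x^∞ e^{-t} t^{a-1} dt`. -/
noncomputable def uGamma (a x : ℝ) : ℝ := ∫ t in Set.Ioi x, Real.exp (-t) * t ^ (a - 1)

/-!
Condition on the random set `Φ`. Given `Φ = S`, the false-alarm event only involves `Z_S`
and the missed-detection event only involves `(H, Z_S)`, and both are independent of `Φ`.
The false-alarm probability is the gamma tail `Γ(v_S, (μ - σ_w²)/(ω_S P_j)) / Γ(v_S)`.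
For the missed detection, integrate the gamma CDF
`P[Z_S < (μ - ρ₁(h))/P_j] = 1 - Γ(v_S, (μ - ρ₁(h))/(ω_S P_j)) / Γ(v_S)` against the `Exp(1)`
density of `H`; it vanishes for `h ≥ ρ₂`, which leaves `1 - e^{-ρ₂}` minus the integral in the
formula. For `S = ∅` there is no false alarm and the miss probability is
`P[H < ρ₂] = 1 - e^{-ρ₂}`. Summing over `S` with the weights `P_S`, which add up to `1`, gives
the formula.
-/

open Real Set

lemma uGamma_one (x : ℝ) : uGamma 1 x = exp (-x) := by
  simp only [uGamma, sub_self, rpow_zero, mul_one]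
  exact integral_exp_neg_Ioi x

lemma setIntegral_gammaPDFReal_Ioi {a r c : ℝ} (hr : 0 < r) (hc : 0 ≤ c) :
    ∫ x in Ioi c, gammaPDFReal a r x = uGamma a (r * c) / Gamma a := by
  have hpdf : ∀ x ∈ Ioi c,
      gammaPDFReal a r x = r / Gamma a * (exp (-(r * x)) * (r * x) ^ (a - 1)) := by
    intro x hx
    have hx0 : 0 ≤ x := hc.trans (le_of_lt hx)
    rw [gammaPDFReal, if_pos hx0, mul_rpow hr.le hx0, rpow_sub_one hr.ne' a]
    field_simp
  rw [setIntegral_congr_fun measurableSet_Ioi hpdf, integral_const_mul,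
    integral_comp_mul_left_Ioi (fun t => exp (-t) * t ^ (a - 1)) c hr, smul_eq_mul, uGamma]
  field_simp

lemma gammaMeasure_real_Ioi {a r c : ℝ} (ha : 0 < a) (hr : 0 < r) (hc : 0 ≤ c) :
    (gammaMeasure a r).real (Ioi c) = uGamma a (r * c) / Gamma a := by
  rw [← setIntegral_gammaPDFReal_Ioi hr hc, measureReal_def, gammaMeasure,
    withDensity_apply _ measurableSet_Ioi, integral_eq_lintegral_of_nonneg_ae]
  · rfl
  · exact ae_of_all _ (gammaPDFReal_nonneg ha hr)
  · exact (measurable_gammaPDFReal a r).aestronglyMeasurable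

lemma gammaMeasure_Iio_of_nonpos {a r c : ℝ} (hc : c ≤ 0) : gammaMeasure a r (Iio c) = 0 := by
  rw [gammaMeasure, withDensity_apply _ measurableSet_Iio]
  exact lintegral_gammaPDF_of_nonpos hc

lemma gammaMeasure_real_Iio {a r c : ℝ} (ha : 0 < a) (hr : 0 < r) (hc : 0 ≤ c) :
    (gammaMeasure a r).real (Iio c) = 1 - uGamma a (r * c) / Gamma a := by
  have := isProbabilityMeasure_gammaMeasure ha hr
  have : NullSingletonClass (gammaMeasure a r) := by unfold gammaMeasure; infer_instance
  rw [← compl_Ici, measureReal_compl measurableSet_Ici, probReal_univ,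
    measureReal_congr Ioi_ae_eq_Ici.symm, gammaMeasure_real_Ioi ha hr hc]

lemma expMeasure_one_real_Iio {c : ℝ} (hc : 0 ≤ c) :
    (expMeasure 1).real (Iio c) = 1 - exp (-c) := by
  rw [expMeasure, gammaMeasure_real_Iio one_pos one_pos hc, uGamma_one, Gamma_one, one_mul, div_one]

lemma integral_exp_neg (a b : ℝ) : ∫ x in a..b, exp (-x) = exp (-a) - exp (-b) := by
  simp [intervalIntegral.integral_comp_neg, integral_exp]

lemma toReal_lintegral_expMeasure_one_measure_Iio (ν : Measure ℝ) [IsFiniteMeasure ν]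
    (hν : ν (Iio 0) = 0) {a c : ℝ} (ha : 0 < a) (hc : 0 ≤ c) :
    (∫⁻ h, ν (Iio (c - a * h)) ∂expMeasure 1).toReal
      = ∫ h in (0 : ℝ)..c / a, exp (-h) * ν.real (Iio (c - a * h)) := by
  have hmeas : Measurable fun h => ν (Iio (c - a * h)) :=
    (Monotone.measurable fun s t hst => measure_mono (Set.Iio_subset_Iio hst)).comp
      (measurable_const.sub (measurable_const.mul measurable_id))
  have hdensity : ∀ h, gammaPDF 1 1 h * ν (Iio (c - a * h))
      = (Icc 0 (c / a)).indicator
          (fun h => ENNReal.ofReal (exp (-h) * ν.real (Iio (c - a * h)))) h := by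
    intro h
    rcases lt_or_ge h 0 with hneg | hnonneg
    · rw [gammaPDF_of_neg hneg, zero_mul, indicator_of_notMem fun hmem => hneg.not_ge hmem.1]
    rcases le_or_gt h (c / a) with hle | hgt
    · rw [indicator_of_mem (Set.mem_Icc.mpr ⟨hnonneg, hle⟩), gammaPDF_of_nonneg hnonneg,
        ENNReal.ofReal_mul (exp_nonneg _), ofReal_measureReal]
      simp only [rpow_one, Gamma_one, div_one, sub_self, rpow_zero, mul_one, one_mul]
    · have : c - a * h ≤ 0 := by rw [div_lt_iff₀ ha] at hgt; linarith
      rw [indicator_of_notMem fun hmem => hgt.not_ge hmem.2,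
        measure_mono_null (Set.Iio_subset_Iio this) hν, mul_zero]
  rw [expMeasure, gammaMeasure, lintegral_withDensity_eq_lintegral_mul _
    (show Measurable (gammaPDF 1 1) from (measurable_gammaPDFReal 1 1).ennreal_ofReal) hmeas,
    Pi.mul_def, funext hdensity,
    lintegral_indicator measurableSet_Icc, intervalIntegral.integral_of_le (div_nonneg hc ha.le),
    ← integral_Icc_eq_integral_Ioc, integral_eq_lintegral_of_nonneg_ae]
  · exact ae_of_all _ fun h => mul_nonneg (exp_nonneg _) measureReal_nonneg
  · exact ((continuous_exp.comp continuous_neg).measurable.mul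
      hmeas.ennreal_toReal).aestronglyMeasurable

lemma toReal_lintegral_expMeasure_one_gammaMeasure_Iio {v r a c : ℝ} (hv : 0 < v) (hr : 0 < r)
    (ha : 0 < a) (hc : 0 ≤ c) :
    (∫⁻ h, gammaMeasure v r (Iio (c - a * h)) ∂expMeasure 1).toReal
      = 1 - exp (-(c / a))
          - ∫ x in (0 : ℝ)..c / a, exp (-x) * (uGamma v (r * (c - a * x)) / Gamma v) := by
  have := isProbabilityMeasure_gammaMeasure hv hr
  set F := fun x => (gammaMeasure v r).real (Iio (c - a * x))
  have hF : Antitone F := fun x y hxy =>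
    measureReal_mono (Set.Iio_subset_Iio (by nlinarith))
  have hexp_int : IntervalIntegrable (fun x => exp (-x)) volume 0 (c / a) :=
    (continuous_exp.comp continuous_neg).intervalIntegrable _ _
  have hmix_int : IntervalIntegrable (fun x => exp (-x) * F x) volume 0 (c / a) :=
    hF.intervalIntegrable.continuousOn_mul (continuous_exp.comp continuous_neg).continuousOn
  have htail : ∫ x in (0 : ℝ)..c / a, exp (-x) * (uGamma v (r * (c - a * x)) / Gamma v)
      = ∫ x in (0 : ℝ)..c / a, (exp (-x) - exp (-x) * F x) := by
    refine intervalIntegral.integral_congr fun x hx => ?_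
    rw [uIcc_of_le (div_nonneg hc ha.le), Set.mem_Icc, le_div_iff₀ ha] at hx
    simp only [F, gammaMeasure_real_Iio hv hr (by linarith : 0 ≤ c - a * x)]
    ring
  rw [toReal_lintegral_expMeasure_one_measure_Iio _ (gammaMeasure_Iio_of_nonpos le_rfl) ha hc,
    htail, intervalIntegral.integral_sub hexp_int hmix_int, integral_exp_neg, neg_zero, exp_zero]
  ring

section Independence

variable {Ω ι : Type*} [MeasurableSpace Ω] [MeasurableSpace ι] {P : Measure Ω}

lemma measureReal_setOf_mem_eq_sum_preimage_inter [Fintype ι] [MeasurableSingletonClass ι]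
    [IsFiniteMeasure P] {Y : Ω → ι} (hY : Measurable Y) {E : ι → Set Ω}
    (hE : ∀ i, MeasurableSet (E i)) :
    P.real {ω | ω ∈ E (Y ω)} = ∑ i, P.real (Y ⁻¹' {i} ∩ E i) := by
  have hunion : {ω | ω ∈ E (Y ω)} = ⋃ i ∈ (Finset.univ : Finset ι), Y ⁻¹' {i} ∩ E i := by
    ext ω; simp
  rw [hunion,
    measureReal_biUnion_finset _ fun i _ => (hY (measurableSet_singleton i)).inter (hE i)]
  intro i _ j _ hij
  exact Disjoint.mono Set.inter_subset_left Set.inter_subset_left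
    (Set.disjoint_singleton.mpr hij |>.preimage Y)

lemma measure_preimage_inter_preimage_prod_eq_mul_lintegral {α β : Type*} [MeasurableSpace α]
    [MeasurableSpace β] [IsFiniteMeasure P] {X : Ω → α} {Y : Ω → ι} {Z : Ω → β}
    (hX : Measurable X) (hY : Measurable Y) (hZ : Measurable Z)
    (hXYZ : IndepFun X (fun ω => (Y ω, Z ω)) P) (hYZ : IndepFun Y Z P)
    {A : Set ι} (hA : MeasurableSet A) {T : Set (α × β)} (hT : MeasurableSet T) :
    P (Y ⁻¹' A ∩ (fun ω => (X ω, Z ω)) ⁻¹' T)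
      = P (Y ⁻¹' A) * ∫⁻ x, P.map Z (Prod.mk x ⁻¹' T) ∂P.map X := by
  have hmap := (indepFun_iff_map_prod_eq_prod_map_map hX.aemeasurable
    (hY.prodMk hZ).aemeasurable).mp hXYZ
  have hmapYZ := (indepFun_iff_map_prod_eq_prod_map_map hY.aemeasurable hZ.aemeasurable).mp hYZ
  set T' : Set (α × ι × β) := {q | q.2.1 ∈ A ∧ (q.1, q.2.2) ∈ T}
  have hT' : MeasurableSet T' :=
    (measurable_fst.comp measurable_snd hA).inter
      (hT.preimage (measurable_fst.prodMk (measurable_snd.comp measurable_snd)))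
  have hsection : ∀ x, Prod.mk x ⁻¹' T' = A ×ˢ (Prod.mk x ⁻¹' T) := fun x => rfl
  calc P (Y ⁻¹' A ∩ (fun ω => (X ω, Z ω)) ⁻¹' T)
      = P.map (fun ω => (X ω, Y ω, Z ω)) T' := by
        rw [Measure.map_apply (hX.prodMk (hY.prodMk hZ)) hT']; rfl
    _ = ∫⁻ x, P (Y ⁻¹' A) * P.map Z (Prod.mk x ⁻¹' T) ∂P.map X := by
        simp only [hmap, Measure.prod_apply hT', hsection, hmapYZ, Measure.prod_prod,
          Measure.map_apply hY hA]
    _ = P (Y ⁻¹' A) * ∫⁻ x, P.map Z (Prod.mk x ⁻¹' T) ∂P.map X :=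
        lintegral_const_mul' _ _ (measure_ne_top _ _)

end Independence

section Detection

variable {Ω ι : Type*} [MeasurableSpace Ω] [MeasurableSpace ι] {P : Measure Ω} {X Z : Ω → ℝ}
  {Y : Ω → ι} {A : Set ι} {a b v θ μ σ : ℝ}

lemma measureReal_inter_gt_gamma (hZ : Measurable Z) (hYZ : IndepFun Y Z P) (hv : 0 < v)
    (hθ : 0 < θ) (hZlaw : P.map Z = gammaMeasure v θ⁻¹) (hb : 0 < b) (hμ : σ ≤ μ)
    (hA : MeasurableSet A) :
    P.real (Y ⁻¹' A ∩ {ω | μ < b * Z ω + σ})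
      = P.real (Y ⁻¹' A) * (uGamma v ((μ - σ) / (θ * b)) / Gamma v) := by
  have hset : {ω | μ < b * Z ω + σ} = Z ⁻¹' Ioi ((μ - σ) / b) := by
    ext ω
    rw [Set.mem_ofPred_eq, Set.mem_preimage, Set.mem_Ioi, div_lt_iff₀' hb, sub_lt_iff_lt_add]
  rw [hset, measureReal_def, hYZ.measure_inter_preimage_eq_mul _ _ hA measurableSet_Ioi,
    ENNReal.toReal_mul, ← Measure.map_apply hZ measurableSet_Ioi, hZlaw, ← measureReal_def,
    ← measureReal_def,
    gammaMeasure_real_Ioi hv (inv_pos.mpr hθ) (div_nonneg (sub_nonneg.mpr hμ) hb.le)]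
  field_simp

lemma measureReal_inter_lt_exp [IsFiniteMeasure P] (hX : Measurable X) (hYX : IndepFun Y X P)
    (hXlaw : P.map X = expMeasure 1) (ha : 0 < a) (hμ : σ ≤ μ) (hA : MeasurableSet A) :
    P.real (Y ⁻¹' A ∩ {ω | a * X ω + σ < μ})
      = P.real (Y ⁻¹' A) * (1 - exp (-((μ - σ) / a))) := by
  have hset : {ω | a * X ω + σ < μ} = X ⁻¹' Iio ((μ - σ) / a) := by
    ext ω
    rw [Set.mem_ofPred_eq, Set.mem_preimage, Set.mem_Iio, lt_div_iff₀' ha, lt_sub_iff_add_lt]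
  rw [hset, measureReal_def, hYX.measure_inter_preimage_eq_mul _ _ hA measurableSet_Iio,
    ENNReal.toReal_mul, ← Measure.map_apply hX measurableSet_Iio, hXlaw, ← measureReal_def,
    ← measureReal_def, expMeasure_one_real_Iio (div_nonneg (sub_nonneg.mpr hμ) ha.le)]

lemma measureReal_inter_lt_exp_add_gamma [IsFiniteMeasure P] (hX : Measurable X)
    (hY : Measurable Y) (hZ : Measurable Z) (hXYZ : IndepFun X (fun ω => (Y ω, Z ω)) P)
    (hYZ : IndepFun Y Z P) (hXlaw : P.map X = expMeasure 1) (hv : 0 < v) (hθ : 0 < θ)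
    (hZlaw : P.map Z = gammaMeasure v θ⁻¹) (ha : 0 < a) (hb : 0 < b) (hμ : σ ≤ μ)
    (hA : MeasurableSet A) :
    P.real (Y ⁻¹' A ∩ {ω | a * X ω + σ + b * Z ω < μ})
      = P.real (Y ⁻¹' A) * (1 - exp (-((μ - σ) / a))
          - ∫ x in (0 : ℝ)..(μ - σ) / a,
              exp (-x) * (uGamma v ((μ - (a * x + σ)) / (θ * b)) / Gamma v)) := by
  set T : Set (ℝ × ℝ) := {q | a * q.1 + σ + b * q.2 < μ}
  have hT : MeasurableSet T := measurableSet_lt (by fun_prop) measurable_const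
  have hsection : ∀ x, Prod.mk x ⁻¹' T = Iio ((μ - σ) / b - a / b * x) := by
    intro x; ext z
    change a * x + σ + b * z < μ ↔ z < (μ - σ) / b - a / b * x
    rw [show (μ - σ) / b - a / b * x = (μ - (a * x + σ)) / b by ring, lt_div_iff₀' hb,
      lt_sub_iff_add_lt']
  have hratio : (μ - σ) / b / (a / b) = (μ - σ) / a := by field_simp
  have hintegrand : ∀ x, θ⁻¹ * ((μ - σ) / b - a / b * x) = (μ - (a * x + σ)) / (θ * b) := by
    intro x; field_simp; ring
  rw [measureReal_def, show Y ⁻¹' A ∩ {ω | a * X ω + σ + b * Z ω < μ}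
      = Y ⁻¹' A ∩ (fun ω => (X ω, Z ω)) ⁻¹' T from rfl,
    measure_preimage_inter_preimage_prod_eq_mul_lintegral hX hY hZ hXYZ hYZ hA hT,
    ENNReal.toReal_mul, hXlaw, hZlaw, ← measureReal_def]
  simp only [hsection]
  rw [toReal_lintegral_expMeasure_one_gammaMeasure_Iio hv (inv_pos.mpr hθ) (div_pos ha hb)
    (div_nonneg (sub_nonneg.mpr hμ) hb.le), hratio]
  simp only [hintegrand]

end Detection

lemma Finset.sum_eq_add_sum_filter_nonempty {α M : Type*} [Fintype α] [AddCommMonoid M]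
    (f : Finset α → M) : ∑ S, f S = f ∅ + ∑ S ∈ univ.filter (·.Nonempty), f S := by
  rw [← sum_filter_add_sum_filter_not univ (·.Nonempty), add_comm]
  congr 1
  rw [show univ.filter (fun S : Finset α => ¬S.Nonempty) = {∅} by ext; simp, sum_singleton]

lemma Finset.sum_eq_sum_filter_nonempty_mul_add {α R : Type*} [Fintype α] [CommRing R]
    {f q g : Finset α → R} {k : R} (hq : ∑ S, q S = 1) (hempty : f ∅ = q ∅ * k)
    (hnonempty : ∀ S : Finset α, S.Nonempty → f S = q S * (g S + k)) :
    ∑ S, f S = ∑ S ∈ univ.filter (·.Nonempty), q S * g S + k := by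
  rw [sum_eq_add_sum_filter_nonempty] at hq ⊢
  rw [hempty, sum_congr rfl fun S hS => hnonempty S (mem_filter.mp hS).2]
  simp only [mul_add, sum_add_distrib, ← sum_mul]
  linear_combination k * hq

theorem average_detection_error_probability_general {Ωs : Type*} [MeasurableSpace Ωs] (P : Measure Ωs)
    [IsProbabilityMeasure P] (N : ℕ) (p : Fin N → ℝ)
    (Φ : Ωs → Finset (Fin N)) (Z : Finset (Fin N) → Ωs → ℝ) (H : Ωs → ℝ)
    (v w : Finset (Fin N) → ℝ)
    (hv : ∀ S : Finset (Fin N), S.Nonempty → 0 < v S)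
    (hw : ∀ S : Finset (Fin N), S.Nonempty → 0 < w S)
    (Pj σw2 Pt dtw α : ℝ) (hPj : 0 < Pj) (hPt : 0 < Pt)
    (hdtw : 0 < dtw)
    (hΦmeas : Measurable Φ) (hZmeas : ∀ S, Measurable (Z S)) (hHmeas : Measurable H)
    (hΦlaw : ∀ S : Finset (Fin N),
      (P {ω | Φ ω = S}).toReal = (∏ k ∈ S, p k) * ∏ k ∈ Sᶜ, (1 - p k))
    (hZlaw : ∀ S : Finset (Fin N), S.Nonempty →
      Measure.map (Z S) P = gammaMeasure (v S) (w S)⁻¹)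
    (hZempty : ∀ ω, Z ∅ ω = 0)
    (hHlaw : Measure.map H P = expMeasure 1)
    (hindep : IndepFun Φ (fun ω S => Z S ω) P)
    (hHindep : IndepFun H (fun ω => (Φ ω, fun S => Z S ω)) P) :
    ∀ μ : ℝ, σw2 < μ →
      (P {ω | μ < Pj * Z (Φ ω) ω + σw2}).toReal
        + (P {ω | Pt * dtw ^ (-α) * H ω + σw2 + Pj * Z (Φ ω) ω < μ}).toReal
      = (∑ S ∈ Finset.univ.filter (fun S : Finset (Fin N) => S.Nonempty),
          ((∏ k ∈ S, p k) * ∏ k ∈ Sᶜ, (1 - p k)) *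
            (uGamma (v S) ((μ - σw2) / (w S * Pj)) / Real.Gamma (v S)
              - ∫ x in (0:ℝ)..((μ - σw2) * dtw ^ α / Pt),
                  Real.exp (-x) *
                    (uGamma (v S) ((μ - (Pt * dtw ^ (-α) * x + σw2)) / (w S * Pj))
                      / Real.Gamma (v S))))
        + 1 - Real.exp (-((μ - σw2) * dtw ^ α / Pt)) := by
  intro μ hμ
  have ha : 0 < Pt * dtw ^ (-α) := by positivity
  have hρ : (μ - σw2) / (Pt * dtw ^ (-α)) = (μ - σw2) * dtw ^ α / Pt := by
    rw [rpow_neg hdtw.le]; field_simp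
  have hlaw : ∀ S, P.real (Φ ⁻¹' {S}) = (∏ k ∈ S, p k) * ∏ k ∈ Sᶜ, (1 - p k) := hΦlaw
  have hΦZ : ∀ S, IndepFun Φ (Z S) P := fun S =>
    hindep.comp measurable_id (measurable_pi_apply S)
  have hsplit : P.real {ω | μ < Pj * Z (Φ ω) ω + σw2}
        + P.real {ω | Pt * dtw ^ (-α) * H ω + σw2 + Pj * Z (Φ ω) ω < μ}
      = ∑ S, (P.real (Φ ⁻¹' {S} ∩ {ω | μ < Pj * Z S ω + σw2})
          + P.real (Φ ⁻¹' {S} ∩ {ω | Pt * dtw ^ (-α) * H ω + σw2 + Pj * Z S ω < μ})) := by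
    rw [sum_add_distrib]
    congr 1
    · exact measureReal_setOf_mem_eq_sum_preimage_inter hΦmeas
        (E := fun S => {ω | μ < Pj * Z S ω + σw2})
        fun S => measurableSet_lt (by fun_prop) (by fun_prop)
    · exact measureReal_setOf_mem_eq_sum_preimage_inter hΦmeas
        (E := fun S => {ω | Pt * dtw ^ (-α) * H ω + σw2 + Pj * Z S ω < μ})
        fun S => measurableSet_lt (by fun_prop) (by fun_prop)
  rw [← measureReal_def, ← measureReal_def, hsplit, ← hρ, add_sub_assoc]
  refine sum_eq_sum_filter_nonempty_mul_add ?_ ?_ fun S hS => ?_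
  · simp only [← hlaw]
    rw [sum_measureReal_preimage_singleton univ fun S _ => hΦmeas (measurableSet_singleton S),
      coe_univ, Set.preimage_univ, probReal_univ]
  · simp only [hZempty, mul_zero, add_zero, lt_asymm hμ, ofPred_false, Set.inter_empty,
      measureReal_empty, zero_add]
    rw [measureReal_inter_lt_exp (Y := Φ) hHmeas (hHindep.comp measurable_id measurable_fst).symm
      hHlaw ha hμ.le (measurableSet_singleton ∅), hlaw]
  · rw [measureReal_inter_gt_gamma (hZmeas S) (hΦZ S) (hv S hS) (hw S hS) (hZlaw S hS) hPj hμ.le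
        (measurableSet_singleton S),
      measureReal_inter_lt_exp_add_gamma (Y := Φ) hHmeas hΦmeas (hZmeas S)
        (hHindep.comp measurable_id
          (measurable_fst.prodMk ((measurable_pi_apply S).comp measurable_snd)))
        (hΦZ S) hHlaw (hv S hS) (hw S hS) (hZlaw S hS) ha hPj hμ.le (measurableSet_singleton S),
      hlaw]
    ring

/-- Paper's Theorem 2, Eq. (22): the average detection error probability
`ξ̄(μ) = P[P_j Z_Φ + σ_w² > μ] + E_H[P[ρ₁(H) + P_j Z_Φ < μ | H]]` (the second term being,
by the tower property, `P[ρ₁(H) + P_j Z_Φ < μ]` with `H ~ Exp(1)` the unknown fading gain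
`|h_{t,w}|²`, `ρ₁(x) = P_t d_{tw}^{-α} x + σ_w²`), equals, for every `μ > σ_w²`,
`∑_{S≠∅} P_S (Γ(v_S,(μ-σ_w²)/(w_S P_j))/Γ(v_S)
  - ∫_0^{ρ₂} e^{-x} Γ(v_S,(μ-ρ₁(x))/(w_S P_j))/Γ(v_S) dx) + 1 - e^{-ρ₂}`,
where `ρ₂ = (μ-σ_w²) d_{tw}^α / P_t`. -/
theorem average_detection_error_probability {Ωs : Type*} [MeasurableSpace Ωs] (P : Measure Ωs)
    [IsProbabilityMeasure P] (N : ℕ) (p : Fin N → ℝ)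
    (Φ : Ωs → Finset (Fin N)) (Z : Finset (Fin N) → Ωs → ℝ) (H : Ωs → ℝ)
    (v w : Finset (Fin N) → ℝ)
    (hv : ∀ S : Finset (Fin N), S.Nonempty → 0 < v S)
    (hw : ∀ S : Finset (Fin N), S.Nonempty → 0 < w S)
    (Pj σw2 Pt dtw α : ℝ) (hPj : 0 < Pj) (hσ : 0 < σw2) (hPt : 0 < Pt)
    (hdtw : 0 < dtw) (hα : 0 < α)
    (hΦmeas : Measurable Φ) (hZmeas : ∀ S, Measurable (Z S)) (hHmeas : Measurable H)
    (hΦlaw : ∀ S : Finset (Fin N),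
      (P {ω | Φ ω = S}).toReal = (∏ k ∈ S, p k) * ∏ k ∈ Sᶜ, (1 - p k))
    (hZlaw : ∀ S : Finset (Fin N), S.Nonempty →
      Measure.map (Z S) P = gammaMeasure (v S) (w S)⁻¹)
    (hZempty : ∀ ω, Z ∅ ω = 0)
    (hHlaw : Measure.map H P = expMeasure 1)
    (hindep : IndepFun Φ (fun ω S => Z S ω) P)
    (hHindep : IndepFun H (fun ω => (Φ ω, fun S => Z S ω)) P) :
    ∀ μ : ℝ, σw2 < μ →
      (P {ω | μ < Pj * Z (Φ ω) ω + σw2}).toReal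
        + (P {ω | Pt * dtw ^ (-α) * H ω + σw2 + Pj * Z (Φ ω) ω < μ}).toReal
      = (∑ S ∈ Finset.univ.filter (fun S : Finset (Fin N) => S.Nonempty),
          ((∏ k ∈ S, p k) * ∏ k ∈ Sᶜ, (1 - p k)) *
            (uGamma (v S) ((μ - σw2) / (w S * Pj)) / Real.Gamma (v S)
              - ∫ x in (0:ℝ)..((μ - σw2) * dtw ^ α / Pt),
                  Real.exp (-x) *
                    (uGamma (v S) ((μ - (Pt * dtw ^ (-α) * x + σw2)) / (w S * Pj))
                      / Real.Gamma (v S))))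
        + 1 - Real.exp (-((μ - σw2) * dtw ^ α / Pt)) :=
  average_detection_error_probability_general P N p Φ Z H v w hv hw Pj σw2 Pt dtw α hPj hPt hdtw
    hΦmeas hZmeas hHmeas hΦlaw hZlaw hZempty hHlaw hindep hHindep
end

section
/- In the setting of Lemma 3 (H, Y_1, …, Y_N independent Exp(1); d_{tr}, d_k > 0, α > 0, P_t, P_j, σ_r² > 0, R > 0; φ = (2^R − 1)/P_t; λ = e^{−d_{tr}^{α} φ σ_r²}), let δ(τ) = P[ H d_{tr}^{−α} < φ ( Σ_{k=1}^N 1{Y_k d_k^{−α}/σ_r² < τ} P_j Y_k d_k^{−α} + σ_r² ) ] for τ > 0. Then δ(τ) → 1 − λ ∏_{k=1}^N 1/(φ P_j d_k^{−α} d_{tr}^{α} + 1) as τ → ∞, and moreover the limit equals the all-jammer outage probability: P[ H d_{tr}^{−α} < φ ( Σ_{k=1}^N P_j Y_k d_k^{−α} + σ_r² ) ] = 1 − λ ∏_{k=1}^N 1/(φ P_j d_k^{−α} d_{tr}^{α} + 1). (Paper's Corollary 3, Eq. (34).) -/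
open MeasureTheory ProbabilityTheory Finset Filter
open Set Real
open scoped ENNReal

/-!
After normalising by `d_tr^{-α}`, the all-jammer outage event reads `H < c + S` with
`S = ∑ a_k Y_k ≥ 0`. Since `H ~ Exp(1)` is independent of `S`, its tail gives
`P[c + S ≤ H] = E[e^{-(c + S)}]`, and independence of the `Y_k` factors this Laplace transform
as `e^{-c} ∏ E[e^{-a_k Y_k}] = e^{-c} ∏ 1/(1 + a_k)`.

For the limit, at every outcome the thresholded sum equals the full sum as soon as `τ` exceeds all
`Y_k d_k^{-α}/σ_r²`, so the indicators of the outage events converge pointwise and dominated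
convergence carries this over to the probabilities.
-/

namespace ProbabilityTheory

lemma expMeasure_Iio {r : ℝ} (hr : 0 < r) (t : ℝ) :
    expMeasure r (Iio t) = ENNReal.ofReal (1 - exp (-(r * t))) := by
  rw [expMeasure, gammaMeasure, withDensity_apply _ measurableSet_Iio,
    Measure.restrict_congr_set Iio_ae_eq_Iic]
  refine (lintegral_exponentialPDF_eq_antiDeriv hr t).trans ?_
  split_ifs with ht
  · rfl
  · rw [ENNReal.ofReal_zero, eq_comm, ENNReal.ofReal_eq_zero, sub_nonpos, one_le_exp_iff]
    nlinarith

lemma expMeasure_Ici {r t : ℝ} (hr : 0 < r) (ht : 0 ≤ t) :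
    expMeasure r (Ici t) = ENNReal.ofReal (exp (-(r * t))) := by
  have : IsProbabilityMeasure (expMeasure r) := isProbabilityMeasure_expMeasure hr
  have hexp : exp (-(r * t)) ≤ 1 := exp_le_one_iff.2 (by nlinarith)
  rw [← compl_Iio, prob_compl_eq_one_sub measurableSet_Iio, expMeasure_Iio hr,
    ENNReal.ofReal_sub _ (exp_nonneg _), ENNReal.ofReal_one,
    ENNReal.sub_sub_cancel ENNReal.one_ne_top (ENNReal.ofReal_le_one.2 hexp)]

lemma ae_nonneg_expMeasure {r : ℝ} (hr : 0 < r) : ∀ᵐ t ∂expMeasure r, 0 ≤ t := by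
  have hneg : expMeasure r (Iio 0) = 0 := by simp [expMeasure_Iio hr]
  exact measure_mono_null (fun t (ht : ¬ 0 ≤ t) => not_le.1 ht) hneg

lemma lintegral_exp_neg_mul_expMeasure {r a : ℝ} (hr : 0 < r) (hra : 0 < r + a) :
    ∫⁻ t, ENNReal.ofReal (exp (-(a * t))) ∂expMeasure r = ENNReal.ofReal (r / (r + a)) := by
  have hpdf (t : ℝ) : exponentialPDF r t * ENNReal.ofReal (exp (-(a * t)))
      = ENNReal.ofReal (r / (r + a)) * exponentialPDF (r + a) t := by
    rcases lt_or_ge t 0 with ht | ht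
    · simp [exponentialPDF_of_neg ht]
    rw [exponentialPDF_of_nonneg ht, exponentialPDF_of_nonneg ht,
      ← ENNReal.ofReal_mul (by positivity), ← ENNReal.ofReal_mul (by positivity), mul_assoc,
      ← exp_add]
    congr 1
    field_simp
    ring_nf
  have hpdf_meas (s : ℝ) : Measurable (exponentialPDF s) :=
    (measurable_exponentialPDFReal s).ennreal_ofReal
  change ∫⁻ t, _ ∂volume.withDensity (exponentialPDF r) = _
  rw [lintegral_withDensity_eq_lintegral_mul _ (hpdf_meas r) (by fun_prop)]
  simp only [Pi.mul_apply, hpdf]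
  rw [lintegral_const_mul _ (hpdf_meas _), lintegral_exponentialPDF_eq_one hra, mul_one]

variable {Ω : Type*} [MeasurableSpace Ω] {P : Measure Ω}

lemma measure_le_of_indepFun_expMeasure [IsFiniteMeasure P] {r : ℝ} (hr : 0 < r)
    {H S : Ω → ℝ} (hH : Measurable H) (hS : Measurable S) (hHS : IndepFun H S P)
    (hlaw : P.map H = expMeasure r) (hS0 : 0 ≤ᵐ[P] S) :
    P {ω | S ω ≤ H ω} = ∫⁻ ω, ENNReal.ofReal (exp (-(r * S ω))) ∂P := by
  have := isProbabilityMeasure_expMeasure hr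
  have hjoint := (indepFun_iff_map_prod_eq_prod_map_map hH.aemeasurable hS.aemeasurable).1 hHS
  have hle : MeasurableSet {p : ℝ × ℝ | p.2 ≤ p.1} :=
    measurableSet_le measurable_snd measurable_fst
  calc P {ω | S ω ≤ H ω} = P.map (fun ω => (H ω, S ω)) {p | p.2 ≤ p.1} :=
        (Measure.map_apply (hH.prodMk hS) hle).symm
    _ = ∫⁻ s, expMeasure r (Ici s) ∂P.map S := by
        rw [hjoint, hlaw, Measure.prod_apply_symm hle]; rfl
    _ = ∫⁻ s, ENNReal.ofReal (exp (-(r * s))) ∂P.map S := by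
        refine lintegral_congr_ae ?_
        filter_upwards [ae_map_iff hS.aemeasurable measurableSet_Ici |>.2 hS0] with s hs
        exact expMeasure_Ici hr hs
    _ = _ := lintegral_map (by fun_prop) hS

lemma lintegral_exp_neg_sum_mul_eq_prod {ι : Type*} [Fintype ι] {r : ℝ} (hr : 0 < r)
    {Y : ι → Ω → ℝ} (hY : ∀ k, Measurable (Y k)) (hind : iIndepFun Y P)
    (hlaw : ∀ k, P.map (Y k) = expMeasure r) {a : ι → ℝ} (ha : ∀ k, 0 < r + a k) :
    ∫⁻ ω, ENNReal.ofReal (exp (-∑ k, a k * Y k ω)) ∂P = ∏ k, ENNReal.ofReal (r / (r + a k)) := by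
  have hprod (ω : Ω) : ENNReal.ofReal (exp (-∑ k, a k * Y k ω))
      = ∏ k, ENNReal.ofReal (exp (-(a k * Y k ω))) := by
    rw [← sum_neg_distrib, exp_sum, ENNReal.ofReal_prod_of_nonneg fun k _ => (exp_nonneg _)]
  simp_rw [hprod]
  refine (lintegral_prod_eq_prod_lintegral_of_indepFun univ
    (fun k ω => ENNReal.ofReal (exp (-(a k * Y k ω))))
    (hind.comp (fun k t => ENNReal.ofReal (exp (-(a k * t)))) fun k => by fun_prop)
    fun k => by fun_prop).trans (prod_congr rfl fun k _ => ?_)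
  rw [← lintegral_map (f := fun t => ENNReal.ofReal (exp (-(a k * t)))) (by fun_prop) (hY k),
    hlaw k, lintegral_exp_neg_mul_expMeasure hr (ha k)]

lemma iIndepFun.indepFun_option_elim {ι β : Type*} [Fintype ι] [MeasurableSpace β]
    {H : Ω → β} {Y : ι → Ω → β} (hind : iIndepFun (fun i : Option ι => Option.elim i H Y) P)
    (hH : Measurable H) (hY : ∀ k, Measurable (Y k)) :
    IndepFun H (fun ω k => Y k ω) P := by
  have hsplit := hind.indepFun_finset {none} (univ.map .some) (by simp)
    (by rintro (_ | k); exacts [hH, hY k])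
  exact hsplit.comp (measurable_pi_apply ⟨none, mem_singleton_self _⟩)
    (measurable_pi_lambda _ fun k => measurable_pi_apply ⟨some k, mem_map_of_mem _ (mem_univ k)⟩)

lemma measureReal_lt_add_sum_mul_eq {ι : Type*} [Fintype ι] {H : Ω → ℝ} {Y : ι → Ω → ℝ}
    (hH : Measurable H) (hY : ∀ k, Measurable (Y k))
    (hind : iIndepFun (fun i : Option ι => Option.elim i H Y) P)
    (hHlaw : P.map H = expMeasure 1) (hYlaw : ∀ k, P.map (Y k) = expMeasure 1)
    {c : ℝ} (hc : 0 ≤ c) {a : ι → ℝ} (ha : ∀ k, 0 ≤ a k) :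
    P.real {ω | H ω < c + ∑ k, a k * Y k ω} = 1 - exp (-c) * ∏ k, 1 / (1 + a k) := by
  have := hind.isProbabilityMeasure
  set S : Ω → ℝ := fun ω => c + ∑ k, a k * Y k ω
  have hS : Measurable S := by fun_prop
  have hHS : IndepFun H S P :=
    (hind.indepFun_option_elim hH hY).comp (ψ := fun y : ι → ℝ => c + ∑ k, a k * y k)
      measurable_id (by fun_prop)
  have hS0 : 0 ≤ᵐ[P] S := by
    have hY0 : ∀ᵐ ω ∂P, ∀ k, 0 ≤ Y k ω := ae_all_iff.2 fun k =>
      ae_of_ae_map (hY k).aemeasurable (hYlaw k ▸ ae_nonneg_expMeasure one_pos)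
    filter_upwards [hY0] with ω hω
    exact add_nonneg hc (sum_nonneg fun k _ => mul_nonneg (ha k) (hω k))
  have htail : P {ω | S ω ≤ H ω}
      = ENNReal.ofReal (exp (-c)) * ∏ k, ENNReal.ofReal (1 / (1 + a k)) := by
    rw [measure_le_of_indepFun_expMeasure one_pos hH hS hHS hHlaw hS0]
    simp_rw [S, one_mul, neg_add, exp_add, ENNReal.ofReal_mul (exp_nonneg _)]
    rw [lintegral_const_mul _ (by fun_prop), lintegral_exp_neg_sum_mul_eq_prod one_pos hY
      (hind.precomp (g := some) (Option.some_injective ι)) hYlaw fun k => by linarith [ha k]]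
  have hcompl : {ω | H ω < S ω} = {ω | S ω ≤ H ω}ᶜ := by ext; simp
  rw [hcompl, probReal_compl_eq_one_sub (measurableSet_le hS hH), measureReal_def, htail,
    ENNReal.toReal_mul, ENNReal.toReal_prod, ENNReal.toReal_ofReal (exp_nonneg _)]
  exact congrArg _ <| congrArg _ <| prod_congr rfl fun k _ =>
    ENNReal.toReal_ofReal (by have := ha k; positivity)

end ProbabilityTheory

lemma eventually_sum_ite_lt_eq_sum {ι α M : Type*} [LinearOrder α] [NoMaxOrder α] [Nonempty α]
    [AddCommMonoid M] (s : Finset ι) (g : ι → α) (f : ι → M) :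
    ∀ᶠ τ in atTop, ∑ k ∈ s, (if g k < τ then f k else 0) = ∑ k ∈ s, f k :=
  (s.eventually_all.2 fun k _ => eventually_gt_atTop (g k)).mono fun _ h =>
    sum_congr rfl fun k hk => if_pos (h k hk)

theorem outage_tendsto_infinite_threshold_general {Ω : Type*} [MeasurableSpace Ω] (P : Measure Ω)
    [IsProbabilityMeasure P] (N : ℕ) (H : Ω → ℝ) (Y : Fin N → Ω → ℝ)
    (hHmeas : Measurable H) (hYmeas : ∀ k, Measurable (Y k))
    (hindep : iIndepFun
      (fun i : Option (Fin N) => Option.elim i H Y) P)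
    (hHlaw : Measure.map H P = expMeasure 1)
    (hYlaw : ∀ k, Measure.map (Y k) P = expMeasure 1)
    (dtr : ℝ) (d : Fin N → ℝ) (α Pt Pj σr2 R : ℝ)
    (hdtr : 0 < dtr) (hd : ∀ k, 0 < d k) (hPt : 0 < Pt) (hPj : 0 < Pj)
    (hσ : 0 < σr2) (hR : 0 < R)
    (φ lam : ℝ) (hφ : φ = ((2:ℝ) ^ R - 1) / Pt)
    (hlam : lam = Real.exp (-(dtr ^ α * φ * σr2)))
    (δ : ℝ → ℝ)
    (hδ : ∀ τ : ℝ, δ τ = (P {ω | H ω * dtr ^ (-α) <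
        φ * ((∑ k, if Y k ω * d k ^ (-α) / σr2 < τ then Pj * Y k ω * d k ^ (-α) else 0)
          + σr2)}).toReal) :
    Tendsto δ atTop
        (nhds (1 - lam * ∏ k, 1 / (φ * Pj * d k ^ (-α) * dtr ^ α + 1))) ∧
    (P {ω | H ω * dtr ^ (-α) <
        φ * ((∑ k, Pj * Y k ω * d k ^ (-α)) + σr2)}).toReal
      = 1 - lam * ∏ k, 1 / (φ * Pj * d k ^ (-α) * dtr ^ α + 1) := by
  have hφ0 : 0 ≤ φ := hφ ▸ div_nonneg (sub_nonneg.2 (one_le_rpow one_le_two hR.le)) hPt.le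
  have hdtrα : 0 < dtr ^ α := rpow_pos_of_pos hdtr α
  have hnormalize : {ω | H ω * dtr ^ (-α) < φ * ((∑ k, Pj * Y k ω * d k ^ (-α)) + σr2)}
      = {ω | H ω < dtr ^ α * φ * σr2 + ∑ k, φ * Pj * d k ^ (-α) * dtr ^ α * Y k ω} := by
    ext ω
    rw [mem_ofPred_eq, mem_ofPred_eq, rpow_neg hdtr.le, ← div_eq_mul_inv, div_lt_iff₀ hdtrα,
      mul_add, add_mul, add_comm, mul_sum, sum_mul]
    congr! 2
    · ring
    · exact sum_congr rfl fun k _ => by ring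
  have hall : (P {ω | H ω * dtr ^ (-α) < φ * ((∑ k, Pj * Y k ω * d k ^ (-α)) + σr2)}).toReal
      = 1 - lam * ∏ k, 1 / (φ * Pj * d k ^ (-α) * dtr ^ α + 1) := by
    rw [hnormalize, hlam]
    simp_rw [add_comm _ (1 : ℝ)]
    exact measureReal_lt_add_sum_mul_eq hHmeas hYmeas hindep hHlaw hYlaw (by positivity)
      fun k => by have := hd k; positivity
  refine ⟨?_, hall⟩
  rw [← hall, funext hδ]
  refine (ENNReal.tendsto_toReal (measure_ne_top _ _)).comp
    (tendsto_measure_of_tendsto_indicator_of_isFiniteMeasure atTop P (fun τ => ?_) fun ω => ?_)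
  · have hterm (k : Fin N) : Measurable fun ω =>
        if Y k ω * d k ^ (-α) / σr2 < τ then Pj * Y k ω * d k ^ (-α) else 0 :=
      Measurable.ite (measurableSet_lt (by fun_prop) measurable_const) (by fun_prop)
        measurable_const
    exact measurableSet_lt (by fun_prop) (by fun_prop)
  · filter_upwards [eventually_sum_ite_lt_eq_sum univ (fun k => Y k ω * d k ^ (-α) / σr2)
      fun k => Pj * Y k ω * d k ^ (-α)] with τ hτ
    rw [hτ]

/-- Paper's Corollary 3, Eq. (34): as the jammer selection threshold `τ → ∞`, the
transmission outage probability `δ(τ)` converges to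
`1 - λ ∏_k 1/(φ P_j d_k^{-α} d_tr^α + 1)`, and this limit equals the all-jammer outage
probability `P[H d_tr^{-α} < φ (∑_k P_j Y_k d_k^{-α} + σ_r²)]`. -/
theorem outage_tendsto_infinite_threshold {Ω : Type*} [MeasurableSpace Ω] (P : Measure Ω)
    [IsProbabilityMeasure P] (N : ℕ) (H : Ω → ℝ) (Y : Fin N → Ω → ℝ)
    (hHmeas : Measurable H) (hYmeas : ∀ k, Measurable (Y k))
    (hindep : iIndepFun
      (fun i : Option (Fin N) => Option.elim i H Y) P)
    (hHlaw : Measure.map H P = expMeasure 1)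
    (hYlaw : ∀ k, Measure.map (Y k) P = expMeasure 1)
    (dtr : ℝ) (d : Fin N → ℝ) (α Pt Pj σr2 R : ℝ)
    (hdtr : 0 < dtr) (hd : ∀ k, 0 < d k) (hα : 0 < α) (hPt : 0 < Pt) (hPj : 0 < Pj)
    (hσ : 0 < σr2) (hR : 0 < R)
    (φ lam : ℝ) (hφ : φ = ((2:ℝ) ^ R - 1) / Pt)
    (hlam : lam = Real.exp (-(dtr ^ α * φ * σr2)))
    (δ : ℝ → ℝ)
    (hδ : ∀ τ : ℝ, δ τ = (P {ω | H ω * dtr ^ (-α) <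
        φ * ((∑ k, if Y k ω * d k ^ (-α) / σr2 < τ then Pj * Y k ω * d k ^ (-α) else 0)
          + σr2)}).toReal) :
    Tendsto δ atTop
        (nhds (1 - lam * ∏ k, 1 / (φ * Pj * d k ^ (-α) * dtr ^ α + 1))) ∧
    (P {ω | H ω * dtr ^ (-α) <
        φ * ((∑ k, Pj * Y k ω * d k ^ (-α)) + σr2)}).toReal
      = 1 - lam * ∏ k, 1 / (φ * Pj * d k ^ (-α) * dtr ^ α + 1) :=
  outage_tendsto_infinite_threshold_general P N H Y hHmeas hYmeas hindep hHlaw hYlaw dtr d α Pt Pj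
    σr2 R hdtr hd hPt hPj hσ hR φ lam hφ hlam δ hδ
end
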